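/- arXiv:1604.06755 — 6 statements merged into one kernel-verified Lean document; each statement's English description precedes it below -/
import Mathlib

section
/- Let m be a positive integer and let A = (a_0, a_1, …, a_i) be a finite sequence of positive integers with i ≥ 1, with continuants p_k, q_k. Then A is an m-palindrome (i.e. [A] = m·[Ã]) if and only if m·q_i = p_{i−1}. -/
/-- Value of a finite continued fraction `[a₀, a₁, …, a_i] = a₀ + 1/(a₁ + 1/(⋯ + 1/a_i))`. -/
noncomputable def cfVal : List ℕ → ℝ
  | [] => 0
  | [a] => (a : ℝ)
  | a :: b :: rest => (a : ℝ) + 1 / cfVal (b :: rest)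

/-- `A` is an `m`-palindrome: `[A] = m·[Ã]`, where `Ã` is the reversal of `A`. -/
def IsMPal (m : ℕ) (A : List ℕ) : Prop := cfVal A = (m : ℝ) * cfVal A.reverse

/-- The prefix `(a₀, …, a_i)` of an infinite sequence of partial quotients. -/
def cfPrefix (a : ℕ → ℕ) (i : ℕ) : List ℕ := (List.range (i + 1)).map a

/-- Continuant numerators, index-shifted: `contP a (k+1) = p_k`, `contP a 0 = p₋₁ = 1`. -/
def contP (a : ℕ → ℕ) : ℕ → ℤ
  | 0 => 1
  | 1 => (a 0 : ℤ)
  | (k+2) => (a (k+1) : ℤ) * contP a (k+1) + contP a k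

/-- Continuant denominators, index-shifted: `contQ a (k+1) = q_k`, `contQ a 0 = q₋₁ = 0`. -/
def contQ (a : ℕ → ℕ) : ℕ → ℤ
  | 0 => 0
  | 1 => 1
  | (k+2) => (a (k+1) : ℤ) * contQ a (k+1) + contQ a k

/-- Concatenation of `k` copies of the finite sequence `A`. -/
def listPow (A : List ℕ) (k : ℕ) : List ℕ := (List.replicate k A).flatten

/-- `x` is a quadratic irrational. -/
def IsQuadraticIrrational (x : ℝ) : Prop :=
  Irrational x ∧ ∃ a b c : ℤ, a ≠ 0 ∧ (a : ℝ) * x ^ 2 + (b : ℝ) * x + (c : ℝ) = 0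

/-- `x` is a reduced quadratic irrational: `x > 1` and its algebraic (Galois) conjugate
lies strictly between `-1` and `0`. -/
def IsReducedQuadIrr (x : ℝ) : Prop :=
  Irrational x ∧ 1 < x ∧
    ∃ a b c : ℤ, a ≠ 0 ∧ (a : ℝ) * x ^ 2 + (b : ℝ) * x + (c : ℝ) = 0 ∧
      ∀ y : ℝ, y ≠ x → (a : ℝ) * y ^ 2 + (b : ℝ) * y + (c : ℝ) = 0 → -1 < y ∧ y < 0

/-- `x` and `y` are equivalent: `x = (a + b·y)/(c + d·y)` for integers with `ad - bc = ±1`. -/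
def RealEquiv (x y : ℝ) : Prop :=
  ∃ a b c d : ℤ, (a * d - b * c = 1 ∨ a * d - b * c = -1) ∧
    ((c : ℝ) + (d : ℝ) * y ≠ 0) ∧ x = ((a : ℝ) + (b : ℝ) * y) / ((c : ℝ) + (d : ℝ) * y)

/-!
Unfolding the continued fraction from the front, `[a₀, …, a_i] = a₀ + 1/[a₁, …, a_i]`, and the
continuant identities `p_i = a₀ p'_{i-1} + q'_{i-1}`, `q_i = p'_{i-1}` for the continuants `p', q'`
of `(a₁, …, a_i)` give `[A] = p_i / q_i`. Unfolding the reversal from the front peels off `a_i`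
instead, and `p_k / p_{k-1} = a_k + p_{k-2} / p_{k-1}` gives `[Ã] = p_i / p_{i-1}`. Hence
`[A] = m·[Ã]` reads `p_i / q_i = m·p_i / p_{i-1}`, and cancelling `p_i ≠ 0` leaves `m·q_i = p_{i-1}`.
-/

theorem contQ_succ_eq_contP_tail (a : ℕ → ℕ) :
    ∀ k, contQ a (k + 1) = contP (fun j => a (j + 1)) k
  | 0 => rfl
  | 1 => by simp [contQ, contP]
  | k + 2 => by
      rw [contQ, contP, contQ_succ_eq_contP_tail a (k + 1), contQ_succ_eq_contP_tail a k]

theorem contP_succ_eq_contP_tail (a : ℕ → ℕ) :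
    ∀ k, contP a (k + 1) =
      a 0 * contP (fun j => a (j + 1)) k + contQ (fun j => a (j + 1)) k
  | 0 => by simp [contP, contQ]
  | 1 => by simp [contP, contQ]; ring
  | k + 2 => by
      rw [contP.eq_3 a (k + 1), contP_succ_eq_contP_tail a (k + 1),
        contP_succ_eq_contP_tail a k, contP.eq_3 _ k, contQ.eq_3 _ k]
      ring

theorem contP_pos {a : ℕ → ℕ} : ∀ {k}, (∀ j < k, 0 < a j) → 0 < contP a k
  | 0, _ => Int.one_pos
  | 1, ha => by simpa [contP] using ha 0 Nat.one_pos
  | k + 2, ha => by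
      have hp₁ : 0 < contP a (k + 1) := contP_pos fun j hj => ha j (by omega)
      have hp₀ : 0 < contP a k := contP_pos fun j hj => ha j (by omega)
      have hak : (0 : ℤ) < a (k + 1) := by exact_mod_cast ha (k + 1) (by omega)
      rw [contP]
      positivity

theorem contQ_succ_pos {a : ℕ → ℕ} {k : ℕ} (ha : ∀ j < k, 0 < a (j + 1)) :
    0 < contQ a (k + 1) := by
  rw [contQ_succ_eq_contP_tail]
  exact contP_pos ha

theorem cfVal_cons (x : ℕ) {L : List ℕ} (hL : L ≠ []) :
    cfVal (x :: L) = x + 1 / cfVal L := by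
  cases L with
  | nil => exact absurd rfl hL
  | cons b rest => rfl

theorem cfPrefix_ne_nil (a : ℕ → ℕ) (i : ℕ) : cfPrefix a i ≠ [] := by
  simp [cfPrefix]

theorem cfPrefix_succ (a : ℕ → ℕ) (i : ℕ) :
    cfPrefix a (i + 1) = a 0 :: cfPrefix (fun j => a (j + 1)) i := by
  simp [cfPrefix, List.range_succ_eq_map, Function.comp_def]

theorem reverse_cfPrefix_succ (a : ℕ → ℕ) (i : ℕ) :
    (cfPrefix a (i + 1)).reverse = a (i + 1) :: (cfPrefix a i).reverse := by
  simp [cfPrefix, List.range_succ]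

theorem cfVal_cfPrefix :
    ∀ {a : ℕ → ℕ} {i : ℕ}, (∀ k < i, 0 < a (k + 1)) →
      cfVal (cfPrefix a i) = contP a (i + 1) / contQ a (i + 1)
  | a, 0, _ => by simp [cfPrefix, cfVal, contP, contQ]
  | a, i + 1, ha => by
      have htail : cfVal (cfPrefix (fun j => a (j + 1)) i) =
          contP (fun j => a (j + 1)) (i + 1) / contQ (fun j => a (j + 1)) (i + 1) :=
        cfVal_cfPrefix fun k hk => ha (k + 1) (by omega)
      have hp : (contP (fun j => a (j + 1)) (i + 1) : ℝ) ≠ 0 := by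
        exact_mod_cast (contP_pos fun j hj => ha j (by omega)).ne'
      rw [cfPrefix_succ, cfVal_cons _ (cfPrefix_ne_nil _ _), htail,
        contP_succ_eq_contP_tail a (i + 1), contQ_succ_eq_contP_tail a (i + 1)]
      push_cast
      field_simp

theorem cfVal_reverse_cfPrefix {a : ℕ → ℕ} :
    ∀ {i : ℕ}, (∀ k < i, 0 < a k) →
      cfVal (cfPrefix a i).reverse = contP a (i + 1) / contP a i
  | 0, _ => by simp [cfPrefix, cfVal, contP]
  | i + 1, ha => by
      have hp₁ : (contP a (i + 1) : ℝ) ≠ 0 := by exact_mod_cast (contP_pos ha).ne'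
      have hp₀ : (contP a i : ℝ) ≠ 0 := by
        exact_mod_cast (contP_pos fun j hj => ha j (by omega)).ne'
      rw [reverse_cfPrefix_succ, cfVal_cons _ (by simpa using cfPrefix_ne_nil a i),
        cfVal_reverse_cfPrefix fun k hk => ha k (by omega), contP]
      push_cast
      field_simp

theorem m_palindrome_iff_continuant_general
    (m : ℕ) (a : ℕ → ℕ) (i : ℕ)
    (ha : ∀ k, k ≤ i → 0 < a k) :
    IsMPal m (cfPrefix a i) ↔ (m : ℤ) * contQ a (i + 1) = contP a i := by
  have hp : (contP a (i + 1) : ℝ) ≠ 0 := by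
    exact_mod_cast (contP_pos fun j hj => ha j (by omega)).ne'
  have hp' : (contP a i : ℝ) ≠ 0 := by
    exact_mod_cast (contP_pos fun j hj => ha j (by omega)).ne'
  have hq : (contQ a (i + 1) : ℝ) ≠ 0 := by
    exact_mod_cast (contQ_succ_pos fun j hj => ha (j + 1) (by omega)).ne'
  rw [IsMPal, cfVal_cfPrefix fun k hk => ha (k + 1) (by omega),
    cfVal_reverse_cfPrefix fun k hk => ha k (by omega), mul_div_assoc',
    div_eq_div_iff hq hp', mul_comm (m : ℝ), mul_assoc, mul_right_inj' hp, eq_comm]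
  exact_mod_cast Iff.rfl

theorem m_palindrome_iff_continuant
    (m : ℕ) (hm : 0 < m) (a : ℕ → ℕ) (i : ℕ) (hi : 1 ≤ i)
    (ha : ∀ k, k ≤ i → 0 < a k) :
    IsMPal m (cfPrefix a i) ↔ (m : ℤ) * contQ a (i + 1) = contP a i :=
  m_palindrome_iff_continuant_general m a i ha
end

section
/- Let m be a positive integer and let A be a finite sequence of positive integers. If A is an m-palindrome, then the concatenation A² = AA is an m-palindrome. -/
/-!
Write `K` for the continuant, so that `[A] = K A / K (tail A)` and, as `K` is invariant under
reversal, `[Ã] = K A / K (dropLast A)`. Hence `A` is an `m`-palindrome exactly when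
`K (dropLast A) = m · K (tail A)`. Euler's identity
`K (A ++ B) = K A · K B + K (dropLast A) · K (tail B)` gives
`K (dropLast (AA)) = K (dropLast A) · c` and `K (tail (AA)) = K (tail A) · c` with the same factor
`c = K A + K (tail (dropLast A))`, so the ratio, and with it the `m`-palindrome condition, passes
from `A` to `AA`.
-/

def continuant : List ℕ → ℕ
  | [] => 1
  | [a] => a
  | a :: b :: l => a * continuant (b :: l) + continuant l

@[simp] lemma continuant_nil : continuant [] = 1 := rfl

@[simp] lemma continuant_singleton (a : ℕ) : continuant [a] = a := rfl

lemma continuant_cons_cons (a b : ℕ) (l : List ℕ) :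
    continuant (a :: b :: l) = a * continuant (b :: l) + continuant l := rfl

lemma continuant_pos : ∀ {l : List ℕ}, (∀ x ∈ l, 0 < x) → 0 < continuant l
  | [], _ => Nat.one_pos
  | [a], h => h a (by simp)
  | a :: b :: l, h => by
    have hb : 0 < continuant (b :: l) := continuant_pos fun x hx => h x (by simp [hx])
    rw [continuant_cons_cons]
    exact Nat.add_pos_left (Nat.mul_pos (h a (by simp)) hb) _

lemma cfVal_eq_continuant_div : ∀ {l : List ℕ}, l ≠ [] → (∀ x ∈ l, 0 < x) →
    cfVal l = continuant l / continuant l.tail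
  | [a], _, _ => by simp [cfVal]
  | a :: b :: l, _, h => by
    have ih : cfVal (b :: l) = continuant (b :: l) / continuant l :=
      cfVal_eq_continuant_div (List.cons_ne_nil b l) fun x hx => h x (by simp [hx])
    have hb : (continuant (b :: l) : ℝ) ≠ 0 :=
      Nat.cast_ne_zero.2 (continuant_pos fun x hx => h x (by simp [hx])).ne'
    have hl : (continuant l : ℝ) ≠ 0 :=
      Nat.cast_ne_zero.2 (continuant_pos fun x hx => h x (by simp [hx])).ne'
    rw [cfVal, ih, continuant_cons_cons, List.tail_cons]
    push_cast
    field_simp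

lemma continuant_append : ∀ {A B : List ℕ}, A ≠ [] → B ≠ [] →
    continuant (A ++ B) = continuant A * continuant B + continuant A.dropLast * continuant B.tail
  | [a], b :: B, _, _ => by simp [continuant_cons_cons]
  | [a, c], b :: B, _, _ => by
    simp [continuant_cons_cons]
    ring
  | a :: c :: d :: A, b :: B, _, _ => by
    have ih₁ := continuant_append (List.cons_ne_nil c (d :: A)) (List.cons_ne_nil b B)
    have ih₂ := continuant_append (List.cons_ne_nil d A) (List.cons_ne_nil b B)
    simp only [List.cons_append] at ih₁ ih₂ ⊢
    simp only [continuant_cons_cons a c, ih₁, ih₂, List.dropLast_cons_cons]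
    ring
termination_by A => A.length

lemma continuant_reverse : ∀ l : List ℕ, continuant l.reverse = continuant l
  | [] => rfl
  | [_] => rfl
  | a :: b :: l => by
    rw [List.reverse_cons, continuant_append (by simp) (List.cons_ne_nil a []),
      List.dropLast_reverse, continuant_reverse (b :: l), List.tail_cons, continuant_reverse l,
      continuant_cons_cons]
    simp only [continuant_singleton, List.tail_cons, continuant_nil]
    ring
termination_by l => l.length

lemma cfVal_reverse_eq_continuant_div {l : List ℕ} (hl : l ≠ []) (h : ∀ x ∈ l, 0 < x) :
    cfVal l.reverse = continuant l / continuant l.dropLast := by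
  rw [cfVal_eq_continuant_div (List.reverse_ne_nil_iff.2 hl) (by simpa using h),
    continuant_reverse, List.tail_reverse, continuant_reverse]

lemma isMPal_iff_continuant {m : ℕ} {A : List ℕ} (hA : A ≠ []) (h : ∀ x ∈ A, 0 < x) :
    IsMPal m A ↔ continuant A.dropLast = m * continuant A.tail := by
  have hK : (continuant A : ℝ) ≠ 0 := Nat.cast_ne_zero.2 (continuant_pos h).ne'
  have hT : (continuant A.tail : ℝ) ≠ 0 :=
    Nat.cast_ne_zero.2 (continuant_pos fun x hx => h x (List.mem_of_mem_tail hx)).ne'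
  have hD : (continuant A.dropLast : ℝ) ≠ 0 :=
    Nat.cast_ne_zero.2 (continuant_pos fun x hx => h x (List.mem_of_mem_dropLast hx)).ne'
  rw [IsMPal, cfVal_eq_continuant_div hA h, cfVal_reverse_eq_continuant_div hA h,
    ← @Nat.cast_inj ℝ, Nat.cast_mul, mul_div_assoc', div_eq_div_iff hT hD]
  constructor
  · intro e
    exact mul_left_cancel₀ hK (by linarith)
  · intro e
    rw [e]
    ring

section AppendSelf

variable {A : List ℕ} (hA : A.tail ≠ [])
include hA

lemma continuant_dropLast_append_self :
    continuant (A ++ A).dropLast =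
      continuant A.dropLast * (continuant A + continuant A.tail.dropLast) := by
  have hA₀ : A ≠ [] := List.ne_nil_of_tail_ne_nil hA
  have hD : A.dropLast ≠ [] := by rcases A with _ | ⟨a, _ | ⟨b, T⟩⟩ <;> simp_all
  rw [List.dropLast_append_of_ne_nil hA₀, continuant_append hA₀ hD, List.tail_dropLast]
  ring

lemma continuant_tail_append_self :
    continuant (A ++ A).tail =
      continuant A.tail * (continuant A + continuant A.tail.dropLast) := by
  have hA₀ : A ≠ [] := List.ne_nil_of_tail_ne_nil hA
  rw [List.tail_append_of_ne_nil hA₀, continuant_append hA hA₀]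
  ring

end AppendSelf

theorem m_palindrome_square_general
    (m : ℕ) (A : List ℕ) (hA : ∀ x ∈ A, 0 < x)
    (h : IsMPal m A) : IsMPal m (A ++ A) := by
  rcases A with _ | ⟨a, T⟩
  · exact h
  have hAA : ∀ x ∈ a :: T ++ a :: T, 0 < x := List.forall_mem_append.2 ⟨hA, hA⟩
  rw [isMPal_iff_continuant (List.cons_ne_nil a T) hA] at h
  rw [isMPal_iff_continuant (by simp) hAA]
  rcases T with _ | ⟨b, T⟩
  · simp only [List.dropLast_singleton, List.tail_cons, continuant_nil] at h
    obtain rfl : m = 1 := by omega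
    simp
  · have hT : (a :: b :: T).tail ≠ [] := List.cons_ne_nil b T
    rw [continuant_dropLast_append_self hT, continuant_tail_append_self hT, h]
    ring

theorem m_palindrome_square
    (m : ℕ) (hm : 0 < m) (A : List ℕ) (hA : ∀ x ∈ A, 0 < x)
    (h : IsMPal m A) : IsMPal m (A ++ A) :=
  m_palindrome_square_general m A hA h
end

section
/- Let m be a positive integer and let A and B be finite sequences of positive integers. If A and B are both m-palindromes, then the concatenation ABA is an m-palindrome. -/
/-!
Write `M(A)` for the product of the matrices `!![a, 1; 1, 0]` over the entries `a` of `A`, so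
that `M(A) = !![p, p'; q, q']` with `[A] = p / q`. Since each factor is symmetric,
`M(Ã) = M(A)ᵀ`, hence `[Ã] = p / p'` and `A` is an `m`-palindrome iff `p' = m q`, i.e. iff
`D M(A) = M(A)ᵀ D` for `D = diag(1, m)`. This intertwining relation is preserved by
`X, Y ↦ X Y X`: `D X Y X = Xᵀ D Y X = Xᵀ Yᵀ D X = Xᵀ Yᵀ Xᵀ D`, and `M(ABA) = M(A) M(B) M(A)`.
-/

open Matrix

theorem star_intertwine_mul_mul_self {R : Type*} [Semigroup R] [StarMul R] {d x y : R}
    (hx : d * x = star x * d) (hy : d * y = star y * d) :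
    d * (x * y * x) = star (x * y * x) * d :=
  calc d * (x * y * x) = star x * (d * y) * x := by
        rw [← mul_assoc, ← mul_assoc, hx, mul_assoc _ d]
    _ = star x * star y * (d * x) := by rw [hy]; simp only [mul_assoc]
    _ = star (x * y * x) * d := by rw [hx]; simp only [star_mul, mul_assoc]

theorem diagonal_mul_eq_transpose_mul_iff {R : Type*} [CommSemiring R] (c : R)
    (M : Matrix (Fin 2) (Fin 2) R) :
    diagonal ![1, c] * M = Mᵀ * diagonal ![1, c] ↔ M 0 1 = c * M 1 0 := by
  simp only [← Matrix.ext_iff, Fin.forall_fin_two, diagonal_mul, mul_diagonal, transpose_apply]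
  simp [mul_comm c, eq_comm (a := M 1 0 * c)]

def cfMat : List ℕ → Matrix (Fin 2) (Fin 2) ℕ
  | [] => 1
  | a :: L => !![a, 1; 1, 0] * cfMat L

theorem cfMat_cons (a : ℕ) (L : List ℕ) : cfMat (a :: L) = !![a, 1; 1, 0] * cfMat L := rfl

theorem cfMat_append (L L' : List ℕ) : cfMat (L ++ L') = cfMat L * cfMat L' := by
  induction L with
  | nil => exact (Matrix.one_mul _).symm
  | cons a L ih => rw [List.cons_append, cfMat_cons, cfMat_cons, ih, Matrix.mul_assoc]

theorem cfMat_reverse (L : List ℕ) : cfMat L.reverse = (cfMat L)ᵀ := by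
  induction L with
  | nil => exact transpose_one.symm
  | cons a L ih =>
    have hsymm : (!![a, 1; 1, 0] : Matrix (Fin 2) (Fin 2) ℕ)ᵀ = !![a, 1; 1, 0] := by
      simp [← Matrix.ext_iff, Fin.forall_fin_two]
    rw [List.reverse_cons, cfMat_append, ih, cfMat_cons, cfMat_cons, cfMat, Matrix.mul_one,
      transpose_mul, hsymm]

theorem cfMat_cons_eq (a : ℕ) (L : List ℕ) :
    cfMat (a :: L) = !![a * cfMat L 0 0 + cfMat L 1 0, a * cfMat L 0 1 + cfMat L 1 1;
      cfMat L 0 0, cfMat L 0 1] := by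
  rw [cfMat_cons, eta_fin_two (cfMat L), mul_fin_two]
  simp

theorem cfMat_pos : ∀ L : List ℕ, L ≠ [] → (∀ x ∈ L, 0 < x) →
    0 < cfMat L 0 0 ∧ 0 < cfMat L 0 1 ∧ 0 < cfMat L 1 0
  | [a], _, hpos => by simpa [cfMat_cons_eq, cfMat] using hpos
  | a :: b :: L, _, hpos => by
    obtain ⟨hp, hp', hq⟩ := cfMat_pos (b :: L) (List.cons_ne_nil _ _)
      fun x hx => hpos x (List.mem_cons_of_mem _ hx)
    have ha : 0 < a * cfMat (b :: L) 0 1 := Nat.mul_pos (hpos a List.mem_cons_self) hp'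
    simp only [cfMat_cons_eq a (b :: L), of_apply, cons_val', cons_val_zero, cons_val_one,
      empty_val', cons_val_fin_one]
    omega

theorem cfVal_eq_div : ∀ L : List ℕ, (∀ x ∈ L, 0 < x) →
    cfVal L = (cfMat L 0 0 : ℝ) / cfMat L 1 0
  | [], _ => by simp [cfVal, cfMat] -- both sides are `0`, the right one since `1 / 0 = 0`
  | [a], _ => by simp [cfVal, cfMat]
  | a :: b :: L, hpos => by
    have htail : ∀ x ∈ b :: L, 0 < x := fun x hx => hpos x (List.mem_cons_of_mem _ hx)
    have hp : (cfMat (b :: L) 0 0 : ℝ) ≠ 0 := by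
      exact_mod_cast (cfMat_pos _ (List.cons_ne_nil _ _) htail).1.ne'
    rw [cfVal, cfVal_eq_div (b :: L) htail, cfMat_cons_eq a (b :: L)]
    simp only [of_apply, cons_val', cons_val_zero, cons_val_one, cons_val_fin_one, Nat.cast_add,
      Nat.cast_mul, one_div, inv_div]
    field_simp

theorem isMPal_iff_cfMat {m : ℕ} {L : List ℕ} (hpos : ∀ x ∈ L, 0 < x) :
    IsMPal m L ↔ cfMat L 0 1 = m * cfMat L 1 0 := by
  rcases eq_or_ne L [] with rfl | hne
  · simp [IsMPal, cfVal, cfMat]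
  obtain ⟨hp, hp', hq⟩ := cfMat_pos L hne hpos
  have hposR : ∀ x ∈ L.reverse, 0 < x := fun x hx => hpos x (List.mem_reverse.1 hx)
  rw [IsMPal, cfVal_eq_div L hpos, cfVal_eq_div L.reverse hposR, cfMat_reverse, transpose_apply,
    transpose_apply, mul_div_assoc', div_eq_div_iff (by positivity) (by positivity)]
  constructor
  · intro h
    have h' : (cfMat L 0 0 : ℝ) * cfMat L 0 1 = cfMat L 0 0 * (m * cfMat L 1 0) :=
      h.trans (by ring)
    exact_mod_cast mul_left_cancel₀ (by positivity) h'
  · intro h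
    rw [h]; push_cast; ring

theorem isMPal_iff_intertwines {m : ℕ} {L : List ℕ} (hpos : ∀ x ∈ L, 0 < x) :
    IsMPal m L ↔ diagonal ![1, m] * cfMat L = star (cfMat L) * diagonal ![1, m] := by
  rw [isMPal_iff_cfMat hpos, star_eq_conjTranspose, conjTranspose_eq_transpose_of_trivial,
    diagonal_mul_eq_transpose_mul_iff]

theorem m_palindrome_ABA_general
    (m : ℕ) (A B : List ℕ)
    (hApos : ∀ x ∈ A, 0 < x) (hBpos : ∀ x ∈ B, 0 < x)
    (hA : IsMPal m A) (hB : IsMPal m B) : IsMPal m (A ++ B ++ A) := by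
  have hABApos : ∀ x ∈ A ++ B ++ A, 0 < x := by
    simp only [List.mem_append]
    rintro x ((hx | hx) | hx) <;> simp [*]
  rw [isMPal_iff_intertwines hApos] at hA
  rw [isMPal_iff_intertwines hBpos] at hB
  rw [isMPal_iff_intertwines hABApos, cfMat_append, cfMat_append]
  exact star_intertwine_mul_mul_self hA hB

theorem m_palindrome_ABA
    (m : ℕ) (hm : 0 < m) (A B : List ℕ)
    (hApos : ∀ x ∈ A, 0 < x) (hBpos : ∀ x ∈ B, 0 < x)
    (hA : IsMPal m A) (hB : IsMPal m B) : IsMPal m (A ++ B ++ A) :=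
  m_palindrome_ABA_general m A B hApos hBpos hA hB
end

section
/- Let m and n be positive integers, and set A = (m) and B = (m², 1). Then m·[A^{2n}] = [B^n] and m·[A^{2n−1}] = [B^{n−1}, m²], and the concatenation B^n A^{2n} is an m-palindrome. -/
/-!
Appending the block `B = (m², 1)` in front of a continued fraction acts on its value by the
Möbius map `g t = [m², 1, t]`, and multiplication by `m` conjugates the map `t ↦ [m, m, t]` of
the block `A² = (m, m)` into `g`. Hence `m·[A^{2k}, Y] = g^k (m·[Y])` and `[B^k, Z] = g^k [Z]`,
and each claim reduces to comparing `m·[Y]` with `[Z]` for short tails `Y`, `Z`.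
-/

/-- `cfWithTail A t = [A, t]`, the continued fraction `A` followed by a real last entry `t`. -/
noncomputable def cfWithTail : List ℕ → ℝ → ℝ
  | [], t => t
  | a :: A, t => (a : ℝ) + 1 / cfWithTail A t

lemma cfVal_cons_s11 (a : ℕ) {Y : List ℕ} (hY : Y ≠ []) :
    cfVal (a :: Y) = (a : ℝ) + 1 / cfVal Y := by
  cases Y with
  | nil => exact absurd rfl hY
  | cons b t => rfl

lemma cfVal_append (A : List ℕ) {Z : List ℕ} (hZ : Z ≠ []) :
    cfVal (A ++ Z) = cfWithTail A (cfVal Z) := by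
  induction A with
  | nil => rfl
  | cons a A ih => rw [List.cons_append, cfVal_cons_s11 a (by simp [hZ]), ih, cfWithTail]

lemma cfWithTail_append (A B : List ℕ) :
    cfWithTail (A ++ B) = cfWithTail A ∘ cfWithTail B := by
  induction A with
  | nil => rfl
  | cons a A ih => funext t; simp only [List.cons_append, cfWithTail, ih, Function.comp_apply]

lemma listPow_succ (A : List ℕ) (k : ℕ) : listPow A (k + 1) = A ++ listPow A k := by
  simp [listPow, List.replicate_succ]

lemma listPow_succ' (A : List ℕ) (k : ℕ) : listPow A (k + 1) = listPow A k ++ A := by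
  simp [listPow, List.replicate_succ']

lemma cfWithTail_listPow (A : List ℕ) (k : ℕ) :
    cfWithTail (listPow A k) = (cfWithTail A)^[k] := by
  induction k with
  | zero => rfl
  | succ k ih => rw [listPow_succ, cfWithTail_append, ih, Function.iterate_succ']

lemma cfVal_listPow_append (A : List ℕ) (k : ℕ) {Z : List ℕ} (hZ : Z ≠ []) :
    cfVal (listPow A k ++ Z) = (cfWithTail A)^[k] (cfVal Z) := by
  rw [cfVal_append _ hZ, cfWithTail_listPow]

lemma listPow_pair_self (a k : ℕ) : listPow [a, a] k = listPow [a] (2 * k) := by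
  induction k with
  | zero => rfl
  | succ k ih =>
    rw [listPow_succ', ih, Nat.mul_succ, listPow_succ', listPow_succ', List.append_assoc]
    rfl

lemma reverse_listPow_pair (a b k : ℕ) : (listPow [a, b] k).reverse = listPow [b, a] k := by
  induction k with
  | zero => rfl
  | succ k ih => rw [listPow_succ, List.reverse_append, ih, listPow_succ']; rfl

lemma listPow_pair_succ (a b k : ℕ) :
    listPow [a, b] (k + 1) = a :: (listPow [b, a] k ++ [b]) := by
  induction k with
  | zero => rfl
  | succ k ih => rw [listPow_succ, ih, listPow_succ]; simp

section Construction

variable {m : ℕ}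

/-- Holds for every real `t`, also where `1 / 0 = 0` intervenes:
both sides are `m² + mt/(mt+1)`. -/
lemma semiconj_mul_cfWithTail (hm : m ≠ 0) :
    Function.Semiconj ((m : ℝ) * ·) (cfWithTail [m, m]) (cfWithTail [m ^ 2, 1]) := by
  intro t
  have hm' : (m : ℝ) ≠ 0 := Nat.cast_ne_zero.2 hm
  simp only [cfWithTail]
  push_cast
  rcases eq_or_ne t 0 with rfl | ht
  · field_simp
  have h₁ : (m : ℝ) + 1 / t = (m * t + 1) / t := by field_simp
  have h₂ : 1 + 1 / ((m : ℝ) * t) = (m * t + 1) / (m * t) := by field_simp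
  rw [h₁, h₂, one_div_div, one_div_div]
  ring

lemma mul_cfVal_listPow_append (hm : m ≠ 0) (k : ℕ) {Y : List ℕ} (hY : Y ≠ []) :
    (m : ℝ) * cfVal (listPow [m] (2 * k) ++ Y) = (cfWithTail [m ^ 2, 1])^[k] (m * cfVal Y) := by
  rw [← listPow_pair_self, cfVal_listPow_append _ _ hY]
  exact ((semiconj_mul_cfWithTail hm).iterate_right k) (cfVal Y)

lemma mul_cfVal_listPow_even (hm : m ≠ 0) (k : ℕ) :
    (m : ℝ) * cfVal (listPow [m] (2 * (k + 1))) = cfVal (listPow [m ^ 2, 1] (k + 1)) := by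
  have hm' : (m : ℝ) ≠ 0 := Nat.cast_ne_zero.2 hm
  rw [Nat.mul_succ, listPow_succ', listPow_succ', List.append_assoc,
    mul_cfVal_listPow_append hm k (by simp), listPow_succ', cfVal_listPow_append _ _ (by simp)]
  congr 1
  simp only [List.singleton_append, cfVal]
  push_cast
  field_simp

lemma mul_cfVal_listPow_odd (hm : m ≠ 0) (k : ℕ) :
    (m : ℝ) * cfVal (listPow [m] (2 * k + 1)) = cfVal (listPow [m ^ 2, 1] k ++ [m ^ 2]) := by
  rw [listPow_succ', mul_cfVal_listPow_append hm k (by simp), cfVal_listPow_append _ _ (by simp)]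
  congr 1
  simp only [cfVal]
  push_cast
  ring

lemma isMPal_listPow_append (hm : m ≠ 0) (k : ℕ) :
    IsMPal m (listPow [m ^ 2, 1] (k + 1) ++ listPow [m] (2 * (k + 1))) := by
  have hm' : (m : ℝ) ≠ 0 := Nat.cast_ne_zero.2 hm
  have hrev : (listPow [m ^ 2, 1] (k + 1) ++ listPow [m] (2 * (k + 1))).reverse =
      listPow [m] (2 * (k + 1)) ++ listPow [1, m ^ 2] (k + 1) := by
    rw [List.reverse_append, reverse_listPow_pair, ← listPow_pair_self, reverse_listPow_pair]
  -- `[A^{2n}] = m + 1/[A^{2n-1}]` and `(1, m²)^n = (1, B^{n-1}, m²)`, so this is the odd case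
  have hcore : cfVal (listPow [m] (2 * (k + 1))) = m * cfVal (listPow [1, m ^ 2] (k + 1)) := by
    rw [listPow_pair_succ, cfVal_cons_s11 1 (by simp), ← mul_cfVal_listPow_odd hm,
      Nat.mul_succ, listPow_succ, List.singleton_append, cfVal_cons_s11 m (by simp [listPow_succ']),
      Nat.cast_one, mul_add, mul_one, one_div, one_div, mul_inv, mul_inv_cancel_left₀ hm']
  unfold IsMPal
  rw [hrev, cfVal_listPow_append _ _ (by simp [← listPow_pair_self, listPow_succ]),
    mul_cfVal_listPow_append hm _ (by simp [listPow_succ]), hcore]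

end Construction

theorem example_m_palindrome_construction
    (m n : ℕ) (hm : 0 < m) (hn : 0 < n) :
    (m : ℝ) * cfVal (listPow [m] (2 * n)) = cfVal (listPow [m ^ 2, 1] n) ∧
    (m : ℝ) * cfVal (listPow [m] (2 * n - 1)) =
      cfVal (listPow [m ^ 2, 1] (n - 1) ++ [m ^ 2]) ∧
    IsMPal m (listPow [m ^ 2, 1] n ++ listPow [m] (2 * n)) := by
  obtain ⟨k, rfl⟩ : ∃ k, n = k + 1 := ⟨n - 1, by omega⟩
  refine ⟨mul_cfVal_listPow_even hm.ne' k, ?_, isMPal_listPow_append hm.ne' k⟩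
  simpa [Nat.mul_succ] using mul_cfVal_listPow_odd hm.ne' k
end

section
/- Let m, r, s be positive integers. Define the finite Fibonacci words over the two-letter alphabet {a, b} by S_0 = (a), S_1 = (a, b), and S_{n+1} = S_n S_{n−1} (concatenation), and for n ≥ 2 let S_n* be S_n with its final two letters removed. Let σ be the substitution replacing each letter a by the pair (rm, r) and each letter b by the pair (sm, s). Then for every n ≥ 2, the sequence σ(S_n*) is an m-palindrome of length 2f_{n+2} − 4, where f_1 = f_2 = 1, f_{k+1} = f_k + f_{k−1} are the Fibonacci numbers. -/
/-- The finite Fibonacci words over the alphabet `{a, b}` (with `a = false`, `b = true`):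
`S₀ = (a)`, `S₁ = (a, b)`, `S_{n+1} = S_n S_{n-1}`. -/
def fibWord : ℕ → List Bool
  | 0 => [false]
  | 1 => [false, true]
  | (n+2) => fibWord (n+1) ++ fibWord n

/-- The substitution replacing the letter `a = false` by `(r·m, r)` and
the letter `b = true` by `(s·m, s)`. -/
def substWord (m r s : ℕ) (w : List Bool) : List ℕ :=
  w.flatMap (fun x => if x then [s * m, s] else [r * m, r])

/-!
Every word `S_n*` is a palindrome: with `t_n` the last two letters of `S_n`, both
`S_n* t_n S_{n-1}*` and `S_{n-1}* t_{n-1} S_n*` equal `S_{n+1}*`, and reversal swaps `t_n` with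
`t_{n-1}`. Hence reversing `σ(S_n*)` just turns each pair `(c·m, c)` into `(c, c·m)`, and
`c·m + 1/(c + 1/(m·x)) = m·(c + 1/(c·m + 1/x))` lets the factor `m` pass through one pair at a time.
-/

/-- The last two letters of `fibWord n` for `n ≥ 1`: `ab` for odd `n`, `ba` for even `n`. -/
def fibSuffix (n : ℕ) : List Bool := [decide (Even n), decide (Odd n)]

lemma fibSuffix_add_two (n : ℕ) : fibSuffix (n + 2) = fibSuffix n := by
  simp [fibSuffix, Nat.even_add_one, parity_simps]

lemma reverse_fibSuffix (n : ℕ) : (fibSuffix (n + 1)).reverse = fibSuffix n := by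
  simp [fibSuffix, Nat.even_add_one, parity_simps]

/-- `fibCore n` is `S_n*`, the Fibonacci word `S_n` without its last two letters. -/
def fibCore : ℕ → List Bool
  | 0 => []
  | 1 => []
  | 2 => [false]
  | (n + 3) => fibCore (n + 2) ++ fibSuffix (n + 2) ++ fibCore (n + 1)

lemma fibWord_eq_fibCore_append (n : ℕ) :
    fibWord (n + 1) = fibCore (n + 1) ++ fibSuffix (n + 1) := by
  induction n using Nat.twoStepInduction with
  | zero => rfl
  | one => rfl
  | more k ih₁ ih₂ =>
    rw [fibWord, ih₁, ih₂, fibCore, ← fibSuffix_add_two (k + 1)]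
    simp only [List.append_assoc]

lemma dropLast_dropLast_fibWord (n : ℕ) : (fibWord n).dropLast.dropLast = fibCore n := by
  cases n with
  | zero => rfl
  | succ n =>
    simp [fibWord_eq_fibCore_append, fibSuffix, List.dropLast_append_of_ne_nil]

/-- `S_n S_{n-1}` and `S_{n-1} S_n` differ only in their last two letters. -/
lemma fibCore_append_fibSuffix_append_comm (n : ℕ) :
    fibCore (n + 2) ++ fibSuffix (n + 2) ++ fibCore (n + 1) =
      fibCore (n + 1) ++ fibSuffix (n + 1) ++ fibCore (n + 2) := by
  induction n with
  | zero => rfl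
  | succ k ih =>
    calc fibCore (k + 3) ++ fibSuffix (k + 3) ++ fibCore (k + 2)
        = fibCore (k + 2) ++ fibSuffix (k + 2) ++
            (fibCore (k + 1) ++ fibSuffix (k + 1) ++ fibCore (k + 2)) := by
          rw [fibCore, fibSuffix_add_two (k + 1)]; simp only [List.append_assoc]
      _ = fibCore (k + 2) ++ fibSuffix (k + 2) ++ fibCore (k + 3) := by
          rw [← ih, fibCore]

lemma reverse_fibCore (n : ℕ) : (fibCore n).reverse = fibCore n := by
  induction n using Nat.strongRec with
  | ind n ih =>
    match n with
    | 0 | 1 | 2 => rfl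
    | k + 3 =>
      rw [fibCore, List.reverse_append, List.reverse_append, ih (k + 1) (by omega),
        ih (k + 2) (by omega), reverse_fibSuffix, ← List.append_assoc,
        ← fibCore_append_fibSuffix_append_comm]

lemma fibWord_length (n : ℕ) : (fibWord n).length = Nat.fib (n + 2) := by
  induction n using Nat.twoStepInduction with
  | zero => rfl
  | one => rfl
  | more k ih₁ ih₂ =>
    rw [fibWord, List.length_append, ih₁, ih₂, Nat.fib_add_two (n := k + 2), add_comm]

/-- Unlike the defining equation, this also covers `L = []`, since `0⁻¹ = 0`. -/
lemma cfVal_cons_s16 (a : ℕ) (L : List ℕ) : cfVal (a :: L) = a + (cfVal L)⁻¹ := by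
  cases L <;> simp [cfVal]

lemma cfVal_nonneg (L : List ℕ) : 0 ≤ cfVal L := by
  induction L with
  | nil => rfl
  | cons a L ih => rw [cfVal_cons_s16]; positivity

lemma mul_add_inv_add_inv_mul {m c G : ℝ} (hm : 0 < m) (hc : 0 < c) (hG : 0 ≤ G) :
    c * m + (c + (m * G)⁻¹)⁻¹ = m * (c + (c * m + G⁻¹)⁻¹) := by
  rcases hG.eq_or_lt with rfl | hG <;> field_simp

lemma cfVal_flatMap_pair_eq_mul {m : ℕ} (hm : 0 < m) {L : List ℕ} (hL : ∀ c ∈ L, 0 < c) :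
    cfVal (L.flatMap fun c => [c * m, c]) = m * cfVal (L.flatMap fun c => [c, c * m]) := by
  induction L with
  | nil => simp [cfVal]
  | cons c L ih =>
    simp only [List.flatMap_cons, List.cons_append, List.nil_append, cfVal_cons_s16]
    rw [ih fun c' hc' => hL c' (List.mem_cons_of_mem c hc')]
    push_cast
    exact mul_add_inv_add_inv_mul (by exact_mod_cast hm) (by exact_mod_cast hL c (by simp))
      (cfVal_nonneg _)

lemma isMPal_flatMap_pair {m : ℕ} (hm : 0 < m) {L : List ℕ} (hL : ∀ c ∈ L, 0 < c)
    (hrev : L.reverse = L) : IsMPal m (L.flatMap fun c => [c * m, c]) := by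
  rw [IsMPal, List.reverse_flatMap, hrev]
  exact cfVal_flatMap_pair_eq_mul hm hL

lemma substWord_eq_flatMap (m r s : ℕ) (w : List Bool) :
    substWord m r s w = (w.map fun x => if x then s else r).flatMap fun c => [c * m, c] := by
  simp only [substWord, List.flatMap_map]
  congr 1; funext x; cases x <;> rfl

lemma length_substWord (m r s : ℕ) (w : List Bool) : (substWord m r s w).length = 2 * w.length := by
  simp [substWord, List.length_flatMap, apply_ite List.length, mul_comm]

theorem fibonacci_word_m_palindrome_general
    (m r s : ℕ) (hm : 0 < m) (hr : 0 < r) (hs : 0 < s)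
    (n : ℕ) :
    IsMPal m (substWord m r s (fibWord n).dropLast.dropLast) ∧
    (substWord m r s (fibWord n).dropLast.dropLast).length = 2 * Nat.fib (n + 2) - 4 := by
  constructor
  · rw [dropLast_dropLast_fibWord, substWord_eq_flatMap]
    refine isMPal_flatMap_pair hm ?_ (by rw [← List.map_reverse, reverse_fibCore])
    simp only [List.mem_map]
    rintro _ ⟨x, -, rfl⟩
    cases x <;> assumption
  · rw [length_substWord, List.length_dropLast, List.length_dropLast, fibWord_length]
    omega

theorem fibonacci_word_m_palindrome
    (m r s : ℕ) (hm : 0 < m) (hr : 0 < r) (hs : 0 < s)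
    (n : ℕ) (hn : 2 ≤ n) :
    IsMPal m (substWord m r s (fibWord n).dropLast.dropLast) ∧
    (substWord m r s (fibWord n).dropLast.dropLast).length = 2 * Nat.fib (n + 2) - 4 :=
  fibonacci_word_m_palindrome_general m r s hm hr hs n
end

section
/- Let m, r, s be positive integers with r ≠ s. Let F be the infinite Fibonacci word over {a, b} (the limit of the words S_0 = (a), S_1 = (a, b), S_{n+1} = S_n S_{n−1}), and let F(m,r,s) be the infinite sequence of positive integers obtained by replacing each a by (rm, r) and each b by (sm, s). Then F(m,r,s) is m-palindromic and its m-palindromic density satisfies d_m([F(m,r,s)]) ≥ 1/φ, where φ = (1 + √5)/2. -/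
/-- The sequence `F(m,r,s)` obtained from the infinite Fibonacci word `f`
(with `a = false`, `b = true`) by replacing each `a` by `(r·m, r)` and each `b` by `(s·m, s)`. -/
def fibCF (f : ℕ → Bool) (m r s : ℕ) (k : ℕ) : ℕ :=
  if f (k / 2) then (if k % 2 = 0 then s * m else s)
  else (if k % 2 = 0 then r * m else r)

/-!
For the continuant matrix `M = contMat A`, the product of the matrices `!![a, 1; 1, 0]` over the
entries of `A`, we have `[A] = M₀₀ / M₁₀` and `contMat Ã = Mᵀ`; so `A` is an `m`-palindrome as
soon as `M₀₁ = m·M₁₀`. Conjugation by `diag(1, m)` turns the matrix of a block `(c·m, c)` into its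
transpose, so if `A` is obtained from a palindrome by substituting such blocks, then
`diag(1, m)·M = Mᵀ·diag(1, m)`, whose `(0, 1)` entry is `M₀₁ = m·M₁₀`.

The Fibonacci word `S_{n+2}` is a palindrome of length `F_{n+4} - 2` followed by two letters, so
`F(m,r,s)` has `m`-palindromic prefixes of lengths `2(F_{n+4} - 2)`, whose consecutive ratios tend
to `1/φ`; between two of them, the first ratio of consecutive `m`-palindromic prefix lengths is at
least as large.
-/

open Matrix Filter Topology
open scoped goldenRatio

lemma SemiconjBy.list_prod_map {M : Type*} [Monoid M] {a : M} {σ : M → M} {l : List M}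
    (h : ∀ x ∈ l, SemiconjBy a x (σ x)) : SemiconjBy a l.prod (l.map σ).prod := by
  induction l with
  | nil => exact SemiconjBy.one_right a
  | cons x l ih =>
    exact (h x List.mem_cons_self).mul_right (ih fun y hy => h y (List.mem_cons_of_mem x hy))

namespace MPalindrome

def quotMat (a : ℕ) : Matrix (Fin 2) (Fin 2) ℤ := !![(a : ℤ), 1; 1, 0]

def contMat (A : List ℕ) : Matrix (Fin 2) (Fin 2) ℤ := (A.map quotMat).prod

@[simp]
lemma contMat_nil : contMat [] = 1 := rfl

@[simp]
lemma contMat_cons (a : ℕ) (A : List ℕ) : contMat (a :: A) = quotMat a * contMat A := rfl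

@[simp]
lemma contMat_append (A B : List ℕ) : contMat (A ++ B) = contMat A * contMat B := by
  simp [contMat]

lemma contMat_reverse (A : List ℕ) : contMat A.reverse = (contMat A)ᵀ := by
  have hsymm : ∀ a, (quotMat a)ᵀ = quotMat a := fun a => by
    ext i j; fin_cases i <;> fin_cases j <;> rfl
  simp [contMat, transpose_list_prod, Function.comp_def, hsymm, List.map_reverse]

lemma contMat_cons_apply (a : ℕ) (A : List ℕ) (i : Fin 2) :
    contMat (a :: A) 0 i = a * contMat A 0 i + contMat A 1 i ∧
      contMat (a :: A) 1 i = contMat A 0 i := by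
  simp [quotMat, mul_apply, Fin.sum_univ_two]

lemma contMat_nonneg (A : List ℕ) (i j : Fin 2) : 0 ≤ contMat A i j := by
  induction A generalizing i with
  | nil => fin_cases i <;> fin_cases j <;> simp
  | cons a A ih =>
    obtain ⟨h0, h1⟩ := contMat_cons_apply a A j
    have := ih 0
    have := ih 1
    fin_cases i
    · rw [Fin.zero_eta, h0]; positivity
    · rwa [Fin.mk_one, h1]

lemma contMat_zero_zero_pos {A : List ℕ} (hA : ∀ x ∈ A, 0 < x) : 0 < contMat A 0 0 := by
  induction A with
  | nil => simp
  | cons a A ih =>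
    rw [(contMat_cons_apply a A 0).1]
    have ha : (0 : ℤ) < a := by exact_mod_cast hA a List.mem_cons_self
    have := ih fun x hx => hA x (List.mem_cons_of_mem a hx)
    have := contMat_nonneg A 1 0
    positivity

/-- Since `1 / 0 = 0`, the recursion of `cfVal` also holds at a one-element list. -/
lemma cfVal_cons (a : ℕ) (A : List ℕ) : cfVal (a :: A) = a + (cfVal A)⁻¹ := by
  cases A <;> simp [cfVal]

lemma cfVal_eq_div {A : List ℕ} (hA : ∀ x ∈ A, 0 < x) :
    cfVal A = contMat A 0 0 / contMat A 1 0 := by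
  induction A with
  | nil => simp [cfVal]
  | cons a A ih =>
    obtain ⟨h0, h1⟩ := contMat_cons_apply a A 0
    have hpos : (0 : ℝ) < contMat A 0 0 := mod_cast
      contMat_zero_zero_pos fun x hx => hA x (List.mem_cons_of_mem a hx)
    rw [cfVal_cons, ih fun x hx => hA x (List.mem_cons_of_mem a hx), h0, h1, inv_div]
    push_cast
    field_simp

lemma isMPal_of_contMat {m : ℕ} (hm : m ≠ 0) {A : List ℕ} (hA : ∀ x ∈ A, 0 < x)
    (h : contMat A 0 1 = m * contMat A 1 0) : IsMPal m A := by
  have hArev : ∀ x ∈ A.reverse, 0 < x := fun x hx => hA x (List.mem_reverse.mp hx)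
  rw [IsMPal, cfVal_eq_div hA, cfVal_eq_div hArev, contMat_reverse, transpose_apply,
    transpose_apply, h, Int.cast_mul, Int.cast_natCast, mul_div_assoc', mul_div_mul_left]
  exact_mod_cast hm

def blockSubst {α : Type*} (c : α → ℕ) (m : ℕ) (w : List α) : List ℕ :=
  w.flatMap fun x => [c x * m, c x]

section blockSubst

variable {α : Type*} (c : α → ℕ) (m : ℕ)

@[simp]
lemma blockSubst_append (v w : List α) :
    blockSubst c m (v ++ w) = blockSubst c m v ++ blockSubst c m w := by
  simp [blockSubst]

@[simp]
lemma blockSubst_singleton (x : α) : blockSubst c m [x] = [c x * m, c x] := by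
  simp [blockSubst]

lemma contMat_blockSubst (w : List α) :
    contMat (blockSubst c m w) = (w.map fun x => contMat [c x * m, c x]).prod := by
  induction w with
  | nil => rfl
  | cons x w ih => rw [← List.singleton_append, blockSubst_append, contMat_append, ih]; simp

lemma semiconjBy_contMat_block (a : ℕ) :
    SemiconjBy (diagonal ![1, (m : ℤ)]) (contMat [a * m, a]) (contMat [a * m, a])ᵀ := by
  ext i j
  fin_cases i <;> fin_cases j <;> simp [quotMat, mul_apply, Fin.sum_univ_two]; ring

lemma semiconjBy_contMat_blockSubst (w : List α) :
    SemiconjBy (diagonal ![1, (m : ℤ)]) (contMat (blockSubst c m w))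
      (contMat (blockSubst c m w.reverse))ᵀ := by
  rw [contMat_blockSubst, contMat_blockSubst, transpose_list_prod, List.map_reverse,
    List.map_reverse, List.reverse_reverse]
  refine SemiconjBy.list_prod_map fun _ hx => ?_
  obtain ⟨x, -, rfl⟩ := List.mem_map.mp hx
  exact semiconjBy_contMat_block m (c x)

end blockSubst

lemma isMPal_blockSubst {α : Type*} {m : ℕ} (hm : m ≠ 0) {c : α → ℕ} (hc : ∀ x, 0 < c x)
    {w : List α} (hw : w.Palindrome) : IsMPal m (blockSubst c m w) := by
  refine isMPal_of_contMat hm (fun x hx => ?_) ?_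
  · obtain ⟨y, -, hy⟩ := List.mem_flatMap.mp hx
    rcases List.mem_pair.mp hy with rfl | rfl
    · exact Nat.mul_pos (hc y) (Nat.pos_of_ne_zero hm)
    · exact hc y
  · have h := congrFun (congrFun (semiconjBy_contMat_blockSubst c m w) 0) 1
    simpa [hw.reverse_eq, mul_apply, Fin.sum_univ_two, mul_comm] using h

/-- `fibWord (n + 2)` without its last two letters (`fibWord_eq_fibPal_append`). -/
def fibPal : ℕ → List Bool
  | 0 => [false]
  | 1 => [false, true, false]
  | n + 2 => fibWord (n + 3) ++ fibPal n

def fibSuffix (n : ℕ) : List Bool := if n % 2 = 0 then [true, false] else [false, true]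

lemma fibSuffix_add_two (n : ℕ) : fibSuffix (n + 2) = fibSuffix n := by
  simp [fibSuffix]

lemma fibSuffix_succ_reverse (n : ℕ) : (fibSuffix (n + 1)).reverse = fibSuffix n := by
  rcases Nat.mod_two_eq_zero_or_one n with h | h <;>
    simp [fibSuffix, Nat.succ_mod_two_eq_zero_iff, h]

lemma fibWord_eq_fibPal_append : ∀ n, fibWord (n + 2) = fibPal n ++ fibSuffix n
  | 0 => rfl
  | 1 => rfl
  | n + 2 => by
    rw [fibWord.eq_3 (n + 2), fibWord_eq_fibPal_append n, fibSuffix_add_two, fibPal.eq_3,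
      List.append_assoc]

lemma fibWord_append_fibPal_succ :
    ∀ n, fibWord (n + 2) ++ fibPal (n + 1) = fibWord (n + 3) ++ fibPal n
  | 0 => rfl
  | n + 1 => by
    rw [fibPal, fibWord.eq_3 (n + 2), List.append_assoc, ← fibWord_append_fibPal_succ n]

lemma fibPal_reverse : ∀ n, (fibPal n).reverse = fibPal n
  | 0 => rfl
  | 1 => rfl
  | n + 2 =>
    calc (fibPal (n + 2)).reverse = (fibPal n).reverse ++ (fibWord (n + 3)).reverse := by
          rw [fibPal.eq_3, List.reverse_append]
      _ = fibPal n ++ fibSuffix n ++ fibPal (n + 1) := by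
          rw [fibPal_reverse n, fibWord_eq_fibPal_append (n + 1), List.reverse_append,
            fibSuffix_succ_reverse, fibPal_reverse (n + 1), List.append_assoc]
      _ = fibPal (n + 2) := by
          rw [← fibWord_eq_fibPal_append, fibWord_append_fibPal_succ, fibPal.eq_3]

lemma fibWord_length : ∀ n, (fibWord n).length = Nat.fib (n + 2)
  | 0 => rfl
  | 1 => rfl
  | n + 2 => by
    rw [fibWord, List.length_append, fibWord_length n, fibWord_length (n + 1), add_comm,
      ← Nat.fib_add_two]

lemma fibPal_length_add_two (n : ℕ) : (fibPal n).length + 2 = Nat.fib (n + 4) := by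
  have h := congrArg List.length (fibWord_eq_fibPal_append n)
  rw [fibWord_length, List.length_append] at h
  rw [h, fibSuffix]
  split <;> rfl

lemma fibPal_length_pos (n : ℕ) : 0 < (fibPal n).length := by
  have h := fibPal_length_add_two n
  have h4 : Nat.fib 4 ≤ Nat.fib (n + 4) := Nat.fib_mono (by omega)
  have : Nat.fib 4 = 3 := rfl
  omega

lemma map_range_of_append {α : Type*} {f : ℕ → α} {v t : List α}
    (h : (List.range (v ++ t).length).map f = v ++ t) : (List.range v.length).map f = v := by
  have h' := congrArg (List.take v.length) h
  rwa [← List.map_take, List.take_range, min_eq_left (by simp), List.take_left] at h'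

lemma map_range_two_mul_fibCF (f : ℕ → Bool) (m r s L : ℕ) :
    (List.range (2 * L)).map (fibCF f m r s) =
      blockSubst (fun b => if b then s else r) m ((List.range L).map f) := by
  induction L with
  | zero => rfl
  | succ L ih =>
    rw [show 2 * (L + 1) = 2 * L + 1 + 1 by ring, List.range_succ, List.range_succ,
      List.map_append, List.map_append, ih, List.range_succ, List.map_append, blockSubst_append,
      List.append_assoc]
    cases f L <;> simp [fibCF, Nat.mul_add_div, *]

lemma cfPrefix_fibCF_eq_blockSubst_fibPal (f : ℕ → Bool) (m r s : ℕ)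
    (hf : ∀ n, (List.range (fibWord n).length).map f = fibWord n) (n : ℕ) :
    cfPrefix (fibCF f m r s) (2 * (fibPal n).length - 1) =
      blockSubst (fun b => if b then s else r) m (fibPal n) := by
  have hlen := fibPal_length_pos n
  rw [cfPrefix, Nat.sub_add_cancel (by omega), map_range_two_mul_fibCF,
    map_range_of_append (t := fibSuffix n)]
  rw [← fibWord_eq_fibPal_append]
  exact hf (n + 2)

section nthRatio

variable {p : ℕ → Prop}

lemma div_le_nth_ratio_count [DecidablePred p] (hp : {i | p i}.Infinite) {x y : ℕ}
    (hx : p x) (hy : p y) (hxy : x < y) :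
    ((x : ℝ) + 1) / ((y : ℝ) + 1) ≤
      ((Nat.nth p (Nat.count p x) : ℝ) + 1) / ((Nat.nth p (Nat.count p x + 1) : ℝ) + 1) := by
  have hle : Nat.nth p (Nat.count p x + 1) ≤ y := by
    rw [← Nat.nth_count hy]
    exact (Nat.nth_le_nth hp).mpr (Nat.count_strict_mono hx hxy)
  rw [Nat.nth_count hx]
  gcongr

lemma le_limsup_nth_ratio (hp : {i | p i}.Infinite) {u : ℕ → ℕ} (hu : ∀ n, p (u n))
    (hmono : StrictMono u) {c : ℝ}
    (hc : Tendsto (fun n => ((u n : ℝ) + 1) / ((u (n + 1) : ℝ) + 1)) atTop (𝓝 c)) :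
    c ≤ limsup (fun k => ((Nat.nth p k : ℝ) + 1) / ((Nat.nth p (k + 1) : ℝ) + 1)) atTop := by
  classical
  set g := fun k => ((Nat.nth p k : ℝ) + 1) / ((Nat.nth p (k + 1) : ℝ) + 1)
  have hg : ∀ k, g k ≤ 1 := fun k => div_le_one_of_le₀
    (by gcongr; exact ((Nat.nth_lt_nth hp).mpr k.lt_succ_self).le) (by positivity)
  have hcount : Tendsto (fun n => Nat.count p (u n)) atTop atTop :=
    StrictMono.tendsto_atTop fun a b hab => Nat.count_strict_mono (hu a) (hmono hab)
  calc c = limsup (fun n => ((u n : ℝ) + 1) / ((u (n + 1) : ℝ) + 1)) atTop := hc.limsup_eq.symm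
    _ ≤ limsup (g ∘ fun n => Nat.count p (u n)) atTop :=
        limsup_le_limsup (Eventually.of_forall fun n =>
          div_le_nth_ratio_count hp (hu n) (hu (n + 1)) (hmono n.lt_succ_self))
          hc.isCoboundedUnder_le (isBoundedUnder_of ⟨1, fun n => hg _⟩)
    _ ≤ limsup g atTop := hcount.limsup_comp_le_limsup
        (isCoboundedUnder_le_of_le _ fun n => by positivity) (isBoundedUnder_of ⟨1, hg⟩)

end nthRatio

lemma tendsto_sub_div_sub {ι : Type*} {l : Filter ι} {a b : ι → ℝ} {L : ℝ} (c : ℝ)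
    (hab : Tendsto (fun i => a i / b i) l (𝓝 L)) (hb : Tendsto b l atTop) :
    Tendsto (fun i => (a i - c) / (b i - c)) l (𝓝 L) := by
  have hcb : Tendsto (fun i => c / b i) l (𝓝 0) := hb.const_div_atTop c
  have h := (hab.sub hcb).div ((tendsto_const_nhds (x := (1 : ℝ))).sub hcb) (by norm_num)
  simp only [sub_zero, div_one] at h
  refine h.congr' ?_
  filter_upwards [hb.eventually_gt_atTop 0] with i hbi
  rw [Pi.div_apply, div_sub_div_same, one_sub_div hbi.ne', div_div_div_cancel_right₀ hbi.ne']

lemma tendsto_fibPal_length_ratio :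
    Tendsto (fun n => ((fibPal n).length : ℝ) / (fibPal (n + 1)).length) atTop (𝓝 φ⁻¹) := by
  have hlen (n : ℕ) : ((fibPal n).length : ℝ) = Nat.fib (n + 4) - 2 := by
    rw [← fibPal_length_add_two, Nat.cast_add]; ring
  simp only [hlen]
  refine tendsto_sub_div_sub 2 ?_ ?_
  · rw [Real.inv_goldenRatio]
    exact tendsto_fib_div_fib_succ_atTop.comp (tendsto_add_atTop_nat 4)
  · exact tendsto_natCast_atTop_atTop.comp
      (Nat.fib_add_two_strictMono.tendsto_atTop.comp (tendsto_add_atTop_nat 3))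

lemma isMPal_cfPrefix_fibCF {m r s : ℕ} (hm : 0 < m) (hr : 0 < r) (hs : 0 < s)
    {f : ℕ → Bool} (hf : ∀ n, (List.range (fibWord n).length).map f = fibWord n) (n : ℕ) :
    IsMPal m (cfPrefix (fibCF f m r s) (2 * (fibPal n).length - 1)) := by
  rw [cfPrefix_fibCF_eq_blockSubst_fibPal f m r s hf]
  exact isMPal_blockSubst hm.ne' (fun b => by cases b <;> assumption)
    (List.Palindrome.of_reverse_eq (fibPal_reverse n))

end MPalindrome

open MPalindrome

theorem fibonacci_m_palindromic_density_general
    (m r s : ℕ) (hm : 0 < m) (hr : 0 < r) (hs : 0 < s)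
    (f : ℕ → Bool) (hf : ∀ n, (List.range (fibWord n).length).map f = fibWord n) :
    {i : ℕ | IsMPal m (cfPrefix (fibCF f m r s) i)}.Infinite ∧
    2 / (1 + Real.sqrt 5) ≤
      Filter.limsup (fun k =>
        ((Nat.nth (fun i => IsMPal m (cfPrefix (fibCF f m r s) i)) k : ℝ) + 1) /
        ((Nat.nth (fun i => IsMPal m (cfPrefix (fibCF f m r s) i)) (k + 1) : ℝ) + 1))
        Filter.atTop := by
  set u : ℕ → ℕ := fun n => 2 * (fibPal n).length - 1
  have hu_add_one (n : ℕ) : (u n : ℝ) + 1 = 2 * (fibPal n).length := by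
    have := fibPal_length_pos n
    rw [Nat.cast_sub (by omega)]; push_cast; ring
  have hmono : StrictMono u := strictMono_nat_of_lt_succ fun n => by
    have := fibPal_length_pos n
    have := fibPal_length_add_two n
    have : (fibPal (n + 1)).length + 2 = Nat.fib (n + 5) := fibPal_length_add_two (n + 1)
    have : Nat.fib (n + 4) < Nat.fib (n + 5) := Nat.fib_add_two_strictMono (by omega)
    show 2 * _ - 1 < 2 * _ - 1
    omega
  have hpal := isMPal_cfPrefix_fibCF hm hr hs hf
  have hinf : {i | IsMPal m (cfPrefix (fibCF f m r s) i)}.Infinite :=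
    Set.infinite_of_injective_forall_mem hmono.injective hpal
  refine ⟨hinf, le_limsup_nth_ratio hinf hpal hmono ?_⟩
  have hφ : 2 / (1 + Real.sqrt 5) = φ⁻¹ := by rw [Real.goldenRatio, inv_div]
  rw [hφ]
  refine tendsto_fibPal_length_ratio.congr fun n => ?_
  rw [hu_add_one, hu_add_one, mul_div_mul_left _ _ two_ne_zero]

theorem fibonacci_m_palindromic_density
    (m r s : ℕ) (hm : 0 < m) (hr : 0 < r) (hs : 0 < s) (hrs : r ≠ s)
    (f : ℕ → Bool) (hf : ∀ n, (List.range (fibWord n).length).map f = fibWord n) :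
    {i : ℕ | IsMPal m (cfPrefix (fibCF f m r s) i)}.Infinite ∧
    2 / (1 + Real.sqrt 5) ≤
      Filter.limsup (fun k =>
        ((Nat.nth (fun i => IsMPal m (cfPrefix (fibCF f m r s) i)) k : ℝ) + 1) /
        ((Nat.nth (fun i => IsMPal m (cfPrefix (fibCF f m r s) i)) (k + 1) : ℝ) + 1))
        Filter.atTop :=
  fibonacci_m_palindromic_density_general m r s hm hr hs f hf
end
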